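/- Price's theorem (1-D case): for a Gaussian density N(w; μ, σ²) and a twice continuously differentiable function h with suitable integrability and decay, d/d(σ²) E_{N(μ,σ²)}[h(w)] = (1/2)·E_{N(μ,σ²)}[h''(w)]. -/

import Mathlib

/-!
The Gaussian density `N(s, w)` solves the heat equation `∂ₛ N = ½ ∂²_w N`. For `s` near `σ²`,
`|∂²_w N(s, w)|` is bounded by a multiple of `N(2σ², w)`, so `s ↦ ∫ h N(s, ·)` may be
differentiated under the integral sign, giving `½ ∫ h ∂²_w N(σ², ·)`. Integrating by parts twice,
with the boundary terms `h ∂_w N` and `h' N` vanishing at `±∞`, turns this into `½ ∫ h'' N(σ², ·)`.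
-/

open MeasureTheory Real Filter Topology

noncomputable def gaussDensity (μ s w : ℝ) : ℝ :=
  (√(2 * π * s))⁻¹ * exp (-(w - μ) ^ 2 / (2 * s))

noncomputable def gaussDensityDeriv (μ s w : ℝ) : ℝ :=
  gaussDensity μ s w * (-(w - μ) / s)

noncomputable def gaussDensitySecondDeriv (μ s w : ℝ) : ℝ :=
  gaussDensity μ s w * (((w - μ) ^ 2 - s) / s ^ 2)

lemma gaussDensity_pos (μ w : ℝ) {s : ℝ} (hs : 0 < s) : 0 < gaussDensity μ s w := by
  unfold gaussDensity
  have : 0 < √(2 * π * s) := sqrt_pos.2 (by positivity)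
  positivity

lemma continuous_gaussDensitySecondDeriv (μ s : ℝ) : Continuous (gaussDensitySecondDeriv μ s) := by
  unfold gaussDensitySecondDeriv gaussDensity
  fun_prop

lemma hasDerivAt_gaussDensity (μ s w : ℝ) :
    HasDerivAt (gaussDensity μ s) (gaussDensityDeriv μ s w) w := by
  have hexp : HasDerivAt (fun w => -(w - μ) ^ 2 / (2 * s)) (-(w - μ) / s) w := by
    refine ((((hasDerivAt_id' w).sub_const μ).pow 2).neg.div_const (2 * s)).congr_deriv ?_
    ring
  refine (hexp.exp.const_mul (√(2 * π * s))⁻¹).congr_deriv ?_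
  unfold gaussDensityDeriv gaussDensity
  ring

lemma hasDerivAt_gaussDensityDeriv (μ w : ℝ) {s : ℝ} (hs : s ≠ 0) :
    HasDerivAt (gaussDensityDeriv μ s) (gaussDensitySecondDeriv μ s w) w := by
  have hlin : HasDerivAt (fun w => -(w - μ) / s) (-1 / s) w :=
    ((hasDerivAt_id' w).sub_const μ).neg.div_const s
  refine ((hasDerivAt_gaussDensity μ s w).mul hlin).congr_deriv ?_
  unfold gaussDensitySecondDeriv gaussDensityDeriv
  field_simp
  ring

lemma hasDerivAt_gaussDensity_variance (μ w : ℝ) {s : ℝ} (hs : 0 < s) :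
    HasDerivAt (fun s => gaussDensity μ s w) (gaussDensitySecondDeriv μ s w / 2) s := by
  have hpos : 0 < 2 * π * s := by positivity
  have hsqrt : HasDerivAt (fun s => √(2 * π * s)) (π / √(2 * π * s)) s := by
    refine (((hasDerivAt_id' s).const_mul (2 * π)).sqrt hpos.ne').congr_deriv ?_
    field_simp
  have hexp : HasDerivAt (fun s => -(w - μ) ^ 2 / (2 * s)) ((w - μ) ^ 2 / (2 * s ^ 2)) s := by
    refine (((hasDerivAt_id' s).const_mul 2).fun_inv (by positivity)
      |>.const_mul (-(w - μ) ^ 2)).congr_deriv ?_ |>.congr_of_eventuallyEq ?_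
    · field_simp
    · exact .of_forall fun s => by simp [div_eq_mul_inv]
  refine ((hsqrt.fun_inv (sqrt_pos.2 hpos).ne').mul hexp.exp).congr_deriv ?_
  unfold gaussDensitySecondDeriv gaussDensity
  field_simp
  rw [sq_sqrt (by positivity)]
  ring

lemma inv_sqrt_mul_exp_eq_mul_gaussDensity (μ w : ℝ) {s t : ℝ} (hs : 0 < s) (ht : 0 < t) :
    (√(2 * π * s))⁻¹ * exp (-(w - μ) ^ 2 / (2 * t)) = √(t / s) * gaussDensity μ t w := by
  have hsqrt : (√(2 * π * s))⁻¹ = √(t / s) * (√(2 * π * t))⁻¹ := by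
    rw [← sqrt_inv, ← sqrt_inv, ← sqrt_mul (by positivity)]
    congr 1
    field_simp
  rw [hsqrt, gaussDensity, mul_assoc]

lemma gaussDensity_le_of_mem_Icc (μ w : ℝ) {a b s : ℝ} (ha : 0 < a) (hs : s ∈ Set.Icc a b) :
    gaussDensity μ s w ≤ √(b / a) * gaussDensity μ b w := by
  have hs0 : 0 < s := ha.trans_le hs.1
  rw [← inv_sqrt_mul_exp_eq_mul_gaussDensity μ w ha (hs0.trans_le hs.2), gaussDensity]
  gcongr ?_ * exp ?_
  · gcongr
    exact hs.1
  · rw [neg_div, neg_div, neg_le_neg_iff]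
    exact div_le_div_of_nonneg_left (sq_nonneg _) (by positivity) (by linarith [hs.2])

lemma exists_sq_mul_gaussDensity_le (μ : ℝ) {t t' : ℝ} (ht : 0 < t) (htt' : t < t') :
    ∃ C, ∀ w, (w - μ) ^ 2 * gaussDensity μ t w ≤ C * gaussDensity μ t' w := by
  set c := 2 * t * t' / (t' - t)
  have hc : 0 < c := div_pos (by nlinarith) (by linarith)
  refine ⟨c * √(t' / t), fun w => ?_⟩
  -- `c` is chosen so that `1 / (2 t) = 1 / c + 1 / (2 t')`; then use `y e^{-y/c} ≤ c`.
  have hsplit : exp (-(w - μ) ^ 2 / (2 * t)) =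
      exp (-((w - μ) ^ 2 / c)) * exp (-(w - μ) ^ 2 / (2 * t')) := by
    rw [← exp_add]
    have : t' - t ≠ 0 := by linarith
    have : t' ≠ 0 := by linarith
    congr 1
    simp only [c]
    field_simp
    ring
  have hpeak : (w - μ) ^ 2 * exp (-((w - μ) ^ 2 / c)) ≤ c := by
    have := mul_exp_neg_le_exp_neg_one ((w - μ) ^ 2 / c)
    have := exp_le_one_iff.2 (neg_nonpos.2 zero_le_one)
    rw [div_mul_eq_mul_div, div_le_iff₀ hc] at *
    nlinarith
  calc (w - μ) ^ 2 * gaussDensity μ t w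
      = (√(2 * π * t))⁻¹ * ((w - μ) ^ 2 * exp (-((w - μ) ^ 2 / c))) *
          exp (-(w - μ) ^ 2 / (2 * t')) := by
        rw [gaussDensity, hsplit]; ring
    _ ≤ (√(2 * π * t))⁻¹ * c * exp (-(w - μ) ^ 2 / (2 * t')) := by gcongr
    _ = c * √(t' / t) * gaussDensity μ t' w := by
        rw [mul_right_comm, inv_sqrt_mul_exp_eq_mul_gaussDensity μ w ht (ht.trans htt')]
        ring

lemma exists_abs_gaussDensitySecondDeriv_le (μ : ℝ) {a b t : ℝ} (ha : 0 < a) (hab : a ≤ b)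
    (hbt : b < t) :
    ∃ K, ∀ s ∈ Set.Icc a b, ∀ w, |gaussDensitySecondDeriv μ s w| ≤ K * gaussDensity μ t w := by
  have hb : 0 < b := ha.trans_le hab
  obtain ⟨C, hC⟩ := exists_sq_mul_gaussDensity_le μ hb hbt
  refine ⟨√(b / a) / a ^ 2 * (C + b * √(t / b)), fun s hs w => ?_⟩
  have hs0 : 0 < s := ha.trans_le hs.1
  have hNs := gaussDensity_le_of_mem_Icc μ w ha hs
  have hNb := gaussDensity_le_of_mem_Icc μ w hb ⟨le_rfl, hbt.le⟩
  have hpos := gaussDensity_pos μ w hs0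
  have hNb0 := (gaussDensity_pos μ w hb).le
  have hnum : |(w - μ) ^ 2 - s| ≤ (w - μ) ^ 2 + b := by
    rw [abs_le]; constructor <;> nlinarith [sq_nonneg (w - μ), hs.2]
  calc |gaussDensitySecondDeriv μ s w|
      = gaussDensity μ s w * |(w - μ) ^ 2 - s| / s ^ 2 := by
        rw [gaussDensitySecondDeriv, abs_mul, abs_of_pos hpos, abs_div,
          abs_of_pos (by positivity : (0 : ℝ) < s ^ 2), mul_div_assoc]
    _ ≤ √(b / a) * gaussDensity μ b w * ((w - μ) ^ 2 + b) / a ^ 2 := by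
        gcongr
        exact hs.1
    _ = √(b / a) / a ^ 2 * ((w - μ) ^ 2 * gaussDensity μ b w + b * gaussDensity μ b w) := by ring
    _ ≤ √(b / a) / a ^ 2 * (C * gaussDensity μ t w + b * (√(t / b) * gaussDensity μ t w)) := by
        gcongr _ * (?_ + b * ?_)
        exact hC w
    _ = √(b / a) / a ^ 2 * (C + b * √(t / b)) * gaussDensity μ t w := by ring

theorem hasDerivAt_integral_mul_gaussDensity (μ : ℝ) {h : ℝ → ℝ} {σ : ℝ} (hσ : 0 < σ)
    (hm : AEStronglyMeasurable h)
    (hint : ∀ s, 0 < s → Integrable (fun w => h w * gaussDensity μ s w)) :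
    Integrable (fun w => h w * gaussDensitySecondDeriv μ σ w) ∧
      HasDerivAt (fun s => ∫ w, h w * gaussDensity μ s w)
        ((∫ w, h w * gaussDensitySecondDeriv μ σ w) / 2) σ := by
  obtain ⟨K, hK⟩ :=
    exists_abs_gaussDensitySecondDeriv_le μ (a := σ / 2) (b := 3 * σ / 2) (t := 2 * σ)
      (by positivity) (by linarith) (by linarith)
  have hball : Metric.ball σ (σ / 2) ⊆ Set.Icc (σ / 2) (3 * σ / 2) := fun s hs => by
    rw [Metric.mem_ball, Real.dist_eq, abs_lt] at hs
    constructor <;> linarith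
  have hbound : ∀ s ∈ Set.Icc (σ / 2) (3 * σ / 2), ∀ w,
      ‖h w * gaussDensitySecondDeriv μ s w‖ ≤ K * ‖h w * gaussDensity μ (2 * σ) w‖ := by
    intro s hs w
    calc ‖h w * gaussDensitySecondDeriv μ s w‖
        = ‖h w‖ * |gaussDensitySecondDeriv μ s w| := by
          rw [norm_mul, Real.norm_eq_abs (gaussDensitySecondDeriv μ s w)]
      _ ≤ ‖h w‖ * (K * gaussDensity μ (2 * σ) w) := by gcongr; exact hK s hs w
      _ = K * ‖h w * gaussDensity μ (2 * σ) w‖ := by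
        rw [norm_mul, Real.norm_of_nonneg (gaussDensity_pos μ w (by positivity)).le]
        ring
  have hdom := (hint (2 * σ) (by positivity)).norm.const_mul K
  have hintF' : Integrable (fun w => h w * gaussDensitySecondDeriv μ σ w) :=
    hdom.mono' (hm.mul (continuous_gaussDensitySecondDeriv μ σ).aestronglyMeasurable)
      (.of_forall (hbound σ ⟨by linarith, by linarith⟩))
  refine ⟨hintF', ?_⟩
  have hderiv := hasDerivAt_integral_of_dominated_loc_of_deriv_le
    (F := fun s w => h w * gaussDensity μ s w)
    (F' := fun s w => h w * gaussDensitySecondDeriv μ s w / 2)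
    (Metric.ball_mem_nhds σ (half_pos hσ))
    (.of_forall fun s => hm.mul (by unfold gaussDensity; fun_prop))
    (hint σ hσ) (hintF'.div_const 2).aestronglyMeasurable
    (.of_forall fun w s hs => by
      rw [norm_div, Real.norm_two]
      exact div_le_div_of_nonneg_right (hbound s (hball hs) w) zero_le_two)
    (hdom.div_const 2)
    (.of_forall fun w s hs => by
      have hs0 : 0 < s := (half_pos hσ).trans_le (hball hs).1
      simpa only [mul_div_assoc] using (hasDerivAt_gaussDensity_variance μ w hs0).const_mul (h w))
  simpa only [integral_div] using hderiv.2

theorem integral_mul_deriv_deriv_eq_deriv_deriv_mul {u u' u'' v v' v'' : ℝ → ℝ}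
    (hu : ∀ x, HasDerivAt u (u' x) x) (hu' : ∀ x, HasDerivAt u' (u'' x) x)
    (hv : ∀ x, HasDerivAt v (v' x) x) (hv' : ∀ x, HasDerivAt v' (v'' x) x)
    (huv'' : Integrable (fun x => u x * v'' x)) (hu''v : Integrable (fun x => u'' x * v x))
    (huv'_bot : Tendsto (fun x => u x * v' x) atBot (𝓝 0))
    (huv'_top : Tendsto (fun x => u x * v' x) atTop (𝓝 0))
    (hu'v_bot : Tendsto (fun x => u' x * v x) atBot (𝓝 0))
    (hu'v_top : Tendsto (fun x => u' x * v x) atTop (𝓝 0)) :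
    ∫ x, u x * v'' x = ∫ x, u'' x * v x := by
  have hW : ∀ x, HasDerivAt (fun x => u x * v' x - u' x * v x) (u x * v'' x - u'' x * v x) x :=
    fun x => (((hu x).mul (hv' x)).sub ((hu' x).mul (hv x))).congr_deriv (by ring)
  have := integral_of_hasDerivAt_of_tendsto hW (huv''.sub hu''v)
    (by simpa using huv'_bot.sub hu'v_bot) (by simpa using huv'_top.sub hu'v_top)
  rwa [sub_zero, integral_sub huv'' hu''v, sub_eq_zero] at this

theorem price_1d_general (μ : ℝ) (h : ℝ → ℝ) (hh : ContDiff ℝ 2 h)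
    (N : ℝ → ℝ → ℝ)
    (hN : ∀ s w, N s w
      = (Real.sqrt (2 * Real.pi * s))⁻¹ * Real.exp (-(w - μ) ^ 2 / (2 * s)))
    (σ2 : ℝ) (hσ : 0 < σ2)
    (hint : ∀ s, 0 < s → Integrable (fun w => h w * N s w))
    (hint2 : ∀ s, 0 < s → Integrable (fun w => deriv (deriv h) w * N s w))
    (hdecay1_top : ∀ s, 0 < s →
      Tendsto (fun w => h w * deriv (fun w' => N s w') w) atTop (nhds 0))
    (hdecay1_bot : ∀ s, 0 < s →
      Tendsto (fun w => h w * deriv (fun w' => N s w') w) atBot (nhds 0))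
    (hdecay2_top : ∀ s, 0 < s →
      Tendsto (fun w => deriv h w * N s w) atTop (nhds 0))
    (hdecay2_bot : ∀ s, 0 < s →
      Tendsto (fun w => deriv h w * N s w) atBot (nhds 0)) :
    HasDerivAt (fun s => ∫ w, h w * N s w)
      ((1/2) * ∫ w, deriv (deriv h) w * N σ2 w) σ2 := by
  obtain rfl : N = gaussDensity μ := funext₂ hN
  have hderivN : deriv (gaussDensity μ σ2) = gaussDensityDeriv μ σ2 :=
    funext fun w => (hasDerivAt_gaussDensity μ σ2 w).deriv
  have hd : Differentiable ℝ h := hh.differentiable (by norm_num)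
  have hd' : Differentiable ℝ (deriv h) :=
    (hh.iterate_deriv' 1 1).differentiable one_ne_zero
  obtain ⟨hint_second, hderiv⟩ :=
    hasDerivAt_integral_mul_gaussDensity μ hσ hh.continuous.aestronglyMeasurable hint
  have hparts := integral_mul_deriv_deriv_eq_deriv_deriv_mul (fun w => (hd w).hasDerivAt)
    (fun w => (hd' w).hasDerivAt) (hasDerivAt_gaussDensity μ σ2)
    (hasDerivAt_gaussDensityDeriv μ · hσ.ne') hint_second (hint2 σ2 hσ)
    (by simpa only [hderivN] using hdecay1_bot σ2 hσ)
    (by simpa only [hderivN] using hdecay1_top σ2 hσ)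
    (hdecay2_bot σ2 hσ) (hdecay2_top σ2 hσ)
  rw [hparts] at hderiv
  convert hderiv using 1
  ring

/-- Price's theorem (1-D case): for the Gaussian density `N(w; μ, s)` with
variance `s` and a twice continuously differentiable `h` with suitable
integrability and decay, `d/ds E_{N(μ,s)}[h(w)] = ½ E_{N(μ,s)}[h''(w)]`. -/
theorem price_1d (μ : ℝ) (h : ℝ → ℝ) (hh : ContDiff ℝ 2 h)
    (N : ℝ → ℝ → ℝ)
    (hN : ∀ s w, N s w
      = (Real.sqrt (2 * Real.pi * s))⁻¹ * Real.exp (-(w - μ) ^ 2 / (2 * s)))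
    (σ2 : ℝ) (hσ : 0 < σ2)
    (hint : ∀ s, 0 < s → Integrable (fun w => h w * N s w))
    (hint1 : ∀ s, 0 < s → Integrable (fun w => deriv h w * N s w))
    (hint2 : ∀ s, 0 < s → Integrable (fun w => deriv (deriv h) w * N s w))
    (hdecay1_top : ∀ s, 0 < s →
      Tendsto (fun w => h w * deriv (fun w' => N s w') w) atTop (nhds 0))
    (hdecay1_bot : ∀ s, 0 < s →
      Tendsto (fun w => h w * deriv (fun w' => N s w') w) atBot (nhds 0))
    (hdecay2_top : ∀ s, 0 < s →
      Tendsto (fun w => deriv h w * N s w) atTop (nhds 0))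
    (hdecay2_bot : ∀ s, 0 < s →
      Tendsto (fun w => deriv h w * N s w) atBot (nhds 0)) :
    HasDerivAt (fun s => ∫ w, h w * N s w)
      ((1/2) * ∫ w, deriv (deriv h) w * N σ2 w) σ2 :=
  price_1d_general μ h hh N hN σ2 hσ hint hint2 hdecay1_top hdecay1_bot hdecay2_top hdecay2_bot
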